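/- Let T = {X, Y, Z} be a set of three pairwise distinct Wang tiles with color deficiency 1 (each side shows at most two distinct colors among the three tiles). If two neighboring sides (e.g. north and west) each show two distinct colors, then there exist two neighboring sides such that the map sending a tile to its pair of colors on these two sides is injective on T. -/
import Mathlib

set_option maxHeartbeats 1000000


/-- A Wang tile over a color type `C` is a quadruple (north, south, west, east). -/
abbrev WangTile (C : Type*) := C × C × C × C

def north {C : Type*} (t : WangTile C) : C := t.1
def south {C : Type*} (t : WangTile C) : C := t.2.1
def west {C : Type*} (t : WangTile C) : C := t.2.2.1
def east {C : Type*} (t : WangTile C) : C := t.2.2.2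

/-- The four pairs of neighboring (non-opposite) sides. -/
def neighborPairs {C : Type*} : List ((WangTile C → C) × (WangTile C → C)) :=
  [(north, west), (north, east), (south, west), (south, east)]

lemma injOn_triple {α β : Type*} {X Y Z : α} {F : α → β}
    (h1 : F X ≠ F Y) (h2 : F X ≠ F Z) (h3 : F Y ≠ F Z) :
    Set.InjOn F ({X, Y, Z} : Set α) := by
  intro a ha b hb hab
  simp only [Set.mem_insert_iff, Set.mem_singleton_iff] at ha hb
  rcases ha with rfl | rfl | rfl <;> rcases hb with rfl | rfl | rfl <;>
    first
      | rfl
      | exact absurd hab h1 | exact absurd hab h2 | exact absurd hab h3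
      | exact absurd hab.symm h1 | exact absurd hab.symm h2 | exact absurd hab.symm h3

/-- Key case: two tiles agree on north and west, the third differs on both. -/
lemma aux {C : Type*} (A B Z : WangTile C) (hAB : A ≠ B)
    (hn : north A = north B) (hw : west A = west B)
    (hnZ : north Z ≠ north A) (hwZ : west Z ≠ west A) :
    ∃ p ∈ neighborPairs (C := C),
      Set.InjOn (fun t => (p.1 t, p.2 t)) ({A, B, Z} : Set (WangTile C)) := by
  have hse : south A ≠ south B ∨ east A ≠ east B := by
    by_contra h
    push_neg at h
    apply hAB
    obtain ⟨A1, A2, A3, A4⟩ := A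
    obtain ⟨B1, B2, B3, B4⟩ := B
    simp only [north, south, west, east] at hn hw h
    simp [hn, hw, h.1, h.2]
  rcases hse with hs | he
  · -- use (south, west)
    refine ⟨(south, west), by simp [neighborPairs], ?_⟩
    apply injOn_triple
    · simp [Prod.ext_iff]; intro h; exact absurd h hs
    · simp [Prod.ext_iff]; intro _ h; exact hwZ h.symm
    · simp [Prod.ext_iff]; intro _ h; exact hwZ (h.symm.trans hw.symm)
  · -- use (north, east)
    refine ⟨(north, east), by simp [neighborPairs], ?_⟩
    apply injOn_triple
    · simp [Prod.ext_iff]; intro _ h; exact he h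
    · simp [Prod.ext_iff]; intro h; exact absurd h.symm hnZ
    · simp [Prod.ext_iff]; intro h; exact absurd (h.symm.trans hn.symm) hnZ

/-- Let `T = {X, Y, Z}` be three pairwise distinct Wang tiles such that each side
shows at most two distinct colors among the three tiles (color deficiency 1), and
suppose the two neighboring sides north and west each show two distinct colors.
Then there exist two neighboring sides such that the map sending a tile to its
pair of colors on these two sides is injective on `T`. -/
theorem stmt_6 {C : Type*} [DecidableEq C] (X Y Z : WangTile C)
    (hXY : X ≠ Y) (hXZ : X ≠ Z) (hYZ : Y ≠ Z)
    (h2 : ∀ f ∈ [north (C := C), south, west, east],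
      (({X, Y, Z} : Finset (WangTile C)).image f).card ≤ 2)
    (hN : (({X, Y, Z} : Finset (WangTile C)).image north).card = 2)
    (hW : (({X, Y, Z} : Finset (WangTile C)).image west).card = 2) :
    ∃ p ∈ neighborPairs (C := C),
      Set.InjOn (fun t => (p.1 t, p.2 t)) ({X, Y, Z} : Set (WangTile C)) := by
  -- not all three norths are equal, not all three wests are equal
  have hNall : ¬ (north X = north Y ∧ north X = north Z) := by
    rintro ⟨h1, h3⟩
    have : ({X, Y, Z} : Finset (WangTile C)).image north = {north X} := by
      simp [Finset.image_insert, ← h1, ← h3]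
    rw [this] at hN
    simp at hN
  have hWall : ¬ (west X = west Y ∧ west X = west Z) := by
    rintro ⟨h1, h3⟩
    have : ({X, Y, Z} : Finset (WangTile C)).image west = {west X} := by
      simp [Finset.image_insert, ← h1, ← h3]
    rw [this] at hW
    simp at hW
  by_cases h1 : north X = north Y ∧ west X = west Y
  · -- Z differs from X (and Y) on north and west
    have hnZ : north Z ≠ north X := fun h => hNall ⟨h1.1, h.symm⟩
    have hwZ : west Z ≠ west X := fun h => hWall ⟨h1.2, h.symm⟩
    exact aux X Y Z hXY h1.1 h1.2 hnZ hwZ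
  by_cases h2' : north X = north Z ∧ west X = west Z
  · have hnY : north Y ≠ north X := fun h => hNall ⟨h.symm, h2'.1⟩
    have hwY : west Y ≠ west X := fun h => hWall ⟨h.symm, h2'.2⟩
    obtain ⟨p, hp, hinj⟩ := aux X Z Y hXZ h2'.1 h2'.2 hnY hwY
    refine ⟨p, hp, ?_⟩
    have hset : ({X, Y, Z} : Set (WangTile C)) = {X, Z, Y} := by
      rw [Set.pair_comm Y Z]
    rw [hset]; exact hinj
  by_cases h3 : north Y = north Z ∧ west Y = west Z
  · have hnX : north X ≠ north Y := fun h => hNall ⟨h, h.trans h3.1⟩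
    have hwX : west X ≠ west Y := fun h => hWall ⟨h, h.trans h3.2⟩
    obtain ⟨p, hp, hinj⟩ := aux Y Z X hYZ h3.1 h3.2 hnX hwX
    refine ⟨p, hp, ?_⟩
    have hset : ({X, Y, Z} : Set (WangTile C)) = {Y, Z, X} := by
      rw [Set.insert_comm, Set.pair_comm X Z]
    rw [hset]; exact hinj
  · -- (north, west) is injective
    refine ⟨(north, west), by simp [neighborPairs], ?_⟩
    apply injOn_triple <;> simp [Prod.ext_iff] <;> tauto
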